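/- arXiv:math/0503476 — 3 statements merged into one kernel-verified Lean document; each statement's English description precedes it below -/
import Mathlib

section
/- Let a, b > 0 with a + b = 1, and let u, v, w be nonnegative measurable functions on ℝⁿ such that u(x)^a · v(y)^b ≤ w(a·x + b·y) for all x, y ∈ ℝⁿ. Then (∫ u dx)^a · (∫ v dx)^b ≤ ∫ w dx. -/
/-!
In dimension one, if `sup u = sup v` then every superlevel set `{w > t}` contains
`a • {u > t} + b • {v > t}`, so the Brunn–Minkowski inequality `|A + B| ≥ |A| + |B|`
on `ℝ` and the layer-cake formula give `a ∫ u + b ∫ v ≤ ∫ w`. Rescaling `u` and `v` to supremum `1`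
and the weighted AM–GM inequality turn this into the multiplicative form; truncation removes
the boundedness needed for the rescaling. The inequality tensorizes: applied on the fibres of
a product it gives the hypothesis for the marginals, and Tonelli's theorem concludes. Hence it
holds on `ℝⁿ` by induction on `n`.
-/

open MeasureTheory Set
open scoped ENNReal Pointwise

namespace ENNReal

theorem lt_rpow_mul_rpow {a b : ℝ} (ha : 0 < a) (hb : 0 < b) (hab : a + b = 1)
    {t x y : ℝ≥0∞} (hx : t < x) (hy : t < y) : t < x ^ a * y ^ b := by
  calc t = t ^ a * t ^ b := by rw [← rpow_add_of_nonneg _ _ ha.le hb.le, hab, rpow_one]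
    _ < x ^ a * y ^ b := mul_lt_mul (rpow_lt_rpow hx ha) (rpow_lt_rpow hy hb)

theorem rpow_mul_rpow_le_add {a b : ℝ} (ha : 0 < a) (hb : 0 < b) (hab : a + b = 1)
    (x y : ℝ≥0∞) : x ^ a * y ^ b ≤ ENNReal.ofReal a * x + ENNReal.ofReal b * y := by
  have hdiv {c : ℝ} (hc : 0 < c) (z : ℝ≥0∞) :
      (z ^ c) ^ (1 / c) / ENNReal.ofReal (1 / c) = ENNReal.ofReal c * z := by
    rw [← rpow_mul, mul_one_div_cancel hc.ne', rpow_one, one_div, ofReal_inv_of_pos hc,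
      div_eq_mul_inv, inv_inv, mul_comm]
  simpa only [hdiv ha, hdiv hb] using
    young_inequality (x ^ a) (y ^ b) (Real.holderConjugate_one_div ha hb hab)

theorem ofReal_rpow_mul_ofReal_rpow_le {x y z a b : ℝ} (ha : 0 < a) (hb : 0 < b)
    (h : x ^ a * y ^ b ≤ z) :
    ENNReal.ofReal x ^ a * ENNReal.ofReal y ^ b ≤ ENNReal.ofReal z := by
  rcases le_or_gt x 0 with hx | hx
  · simp [ofReal_of_nonpos hx, zero_rpow_of_pos ha]
  rcases le_or_gt y 0 with hy | hy
  · simp [ofReal_of_nonpos hy, zero_rpow_of_pos hb]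
  rw [ofReal_rpow_of_pos hx, ofReal_rpow_of_pos hy, ← ofReal_mul (by positivity)]
  exact ofReal_le_ofReal h

theorem iSup_rpow {ι : Sort*} {c : ℝ} (hc : 0 < c) (f : ι → ℝ≥0∞) :
    (⨆ i, f i) ^ c = ⨆ i, f i ^ c :=
  (orderIsoRpow c hc).map_iSup f

end ENNReal

section Lintegral

variable {α : Type*} [MeasurableSpace α] {μ : Measure α} {f : α → ℝ≥0∞}

theorem lintegral_eq_lintegral_meas_ofReal_lt (hf : AEMeasurable f μ) :
    ∫⁻ x, f x ∂μ = ∫⁻ t in Ioi 0, μ {x | ENNReal.ofReal t < f x} := by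
  by_cases htop : μ {x | f x = ∞} = 0
  · have hfin : ∀ᵐ x ∂μ, f x ≠ ∞ := by
      rw [ae_iff]; simpa using htop
    rw [lintegral_congr_ae (hfin.mono fun x hx => (ENNReal.ofReal_toReal hx).symm),
      lintegral_eq_lintegral_meas_lt μ (ae_of_all _ fun _ => ENNReal.toReal_nonneg)
        hf.ennreal_toReal]
    refine setLIntegral_congr_fun measurableSet_Ioi fun t ht => measure_congr ?_
    filter_upwards [hfin] with x hx
    exact propext (ENNReal.ofReal_lt_iff_lt_toReal ht.le hx).symm
  · rw [lintegral_eq_top_of_measure_eq_top_ne_zero hf htop, eq_comm, eq_top_iff]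
    calc ∞ = ∫⁻ _ in Ioi (0 : ℝ), μ {x | f x = ∞} := by simp [htop]
      _ ≤ _ := lintegral_mono fun t => measure_mono fun x (hx : f x = ∞) => by simp [hx]

theorem lintegral_eq_iSup_lintegral_min_natCast (hf : Measurable f) :
    ∫⁻ x, f x ∂μ = ⨆ n : ℕ, ∫⁻ x, min (f x) n ∂μ := by
  rw [← lintegral_iSup (fun n => hf.min measurable_const)
    fun m n hmn x => min_le_min le_rfl (Nat.cast_le.2 hmn)]
  congr with x
  rw [← inf_iSup_eq, ENNReal.iSup_natCast, inf_top_eq]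

end Lintegral

namespace Real

theorem volume_add_volume_le_volume_add_of_isCompact {K L : Set ℝ} (hK : IsCompact K)
    (hL : IsCompact L) (hK₀ : K.Nonempty) (hL₀ : L.Nonempty) :
    volume K + volume L ≤ volume (K + L) := by
  obtain ⟨x, hxK, hx⟩ := hK.exists_isGreatest hK₀
  obtain ⟨y, hyL, hy⟩ := hL.exists_isLeast hL₀
  -- `K + min L` and `max K + L` lie in `K + L` and overlap only at `max K + min L`
  have hinter : (· + y) '' K ∩ (x + ·) '' L ⊆ {x + y} := by
    rintro _ ⟨⟨k, hk, rfl⟩, ⟨l, hl, hkl⟩⟩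
    have := hx hk
    have := hy hl
    simp only [mem_singleton_iff]
    linarith
  calc volume K + volume L = volume ((· + y) '' K) + volume ((x + ·) '' L) := by simp
    _ = volume ((· + y) '' K ∪ (x + ·) '' L) :=
      (measure_union₀ (hL.image (continuous_const_add x)).measurableSet.nullMeasurableSet
        (measure_mono_null hinter (measure_singleton _))).symm
    _ ≤ volume (K + L) := measure_mono <| union_subset
      (image_subset_iff.2 fun k hk => add_mem_add hk hyL)
      (image_subset_iff.2 fun l hl => add_mem_add hxK hl)

theorem volume_add_volume_le_volume_add {A B : Set ℝ} (hA : MeasurableSet A)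
    (hB : MeasurableSet B) (hA₀ : A.Nonempty) (hB₀ : B.Nonempty) :
    volume A + volume B ≤ volume (A + B) := by
  obtain ⟨x, hx⟩ := hA₀
  obtain ⟨y, hy⟩ := hB₀
  rw [hA.measure_eq_iSup_isCompact, hB.measure_eq_iSup_isCompact]
  simp only [iSup_and']
  refine ENNReal.biSup_add_biSup_le' ⟨∅, empty_subset _, isCompact_empty⟩
    ⟨∅, empty_subset _, isCompact_empty⟩ fun K ⟨hKA, hK⟩ L ⟨hLB, hL⟩ => ?_
  calc volume K + volume L ≤ volume (insert x K) + volume (insert y L) := by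
        gcongr <;> exact subset_insert _ _
    _ ≤ volume (insert x K + insert y L) :=
      volume_add_volume_le_volume_add_of_isCompact (hK.insert x) (hL.insert y)
        (insert_nonempty _ _) (insert_nonempty _ _)
    _ ≤ volume (A + B) :=
      measure_mono (add_subset_add (insert_subset hx hKA) (insert_subset hy hLB))

variable {a b : ℝ} {u v w : ℝ → ℝ≥0∞}

theorem ofReal_mul_volume_add_le_volume_superlevel (ha : 0 < a) (hb : 0 < b)
    (hab : a + b = 1) (hu : Measurable u) (hv : Measurable v)
    (h : ∀ x y, u x ^ a * v y ^ b ≤ w (a • x + b • y)) (hsup : ⨆ x, u x = ⨆ x, v x)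
    (t : ℝ≥0∞) :
    ENNReal.ofReal a * volume {x | t < u x} + ENNReal.ofReal b * volume {x | t < v x}
      ≤ volume {x | t < w x} := by
  set A := {x | t < u x}
  set B := {x | t < v x}
  have hAB : A.Nonempty ↔ B.Nonempty := by
    simp only [A, B, Set.Nonempty, mem_ofPred_eq, ← lt_iSup_iff, hsup]
  rcases A.eq_empty_or_nonempty with hA₀ | hA₀
  · simp [hA₀, not_nonempty_iff_eq_empty.1 (hAB.not.1 (not_nonempty_iff_eq_empty.2 hA₀))]
  have hA : MeasurableSet A := measurableSet_lt measurable_const hu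
  have hB : MeasurableSet B := measurableSet_lt measurable_const hv
  calc ENNReal.ofReal a * volume A + ENNReal.ofReal b * volume B
      = volume (a • A) + volume (b • B) := by
        simp [Measure.addHaar_smul, abs_of_pos ha, abs_of_pos hb]
    _ ≤ volume (a • A + b • B) :=
      volume_add_volume_le_volume_add (hA.const_smul₀ a) (hB.const_smul₀ b) hA₀.smul_set
        (hAB.1 hA₀).smul_set
    _ ≤ volume {x | t < w x} := by
      refine measure_mono ?_
      rintro _ ⟨_, ⟨x, hx, rfl⟩, _, ⟨y, hy, rfl⟩, rfl⟩
      exact (ENNReal.lt_rpow_mul_rpow ha hb hab hx hy).trans_le (h x y)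

theorem ofReal_mul_lintegral_add_le (ha : 0 < a) (hb : 0 < b) (hab : a + b = 1)
    (hu : Measurable u) (hv : Measurable v) (hw : Measurable w)
    (h : ∀ x y, u x ^ a * v y ^ b ≤ w (a • x + b • y)) (hsup : ⨆ x, u x = ⨆ x, v x) :
    ENNReal.ofReal a * (∫⁻ x, u x) + ENNReal.ofReal b * (∫⁻ x, v x) ≤ ∫⁻ x, w x := by
  rw [lintegral_eq_lintegral_meas_ofReal_lt hu.aemeasurable,
    lintegral_eq_lintegral_meas_ofReal_lt hv.aemeasurable,
    lintegral_eq_lintegral_meas_ofReal_lt hw.aemeasurable,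
    ← lintegral_const_mul' _ _ ENNReal.ofReal_ne_top,
    ← lintegral_const_mul' _ _ ENNReal.ofReal_ne_top]
  exact (le_lintegral_add _ _).trans <| lintegral_mono fun t =>
    ofReal_mul_volume_add_le_volume_superlevel ha hb hab hu hv h hsup _

theorem lintegral_rpow_mul_lintegral_rpow_le_of_iSup_ne_top (ha : 0 < a) (hb : 0 < b)
    (hab : a + b = 1) (hu : Measurable u) (hv : Measurable v) (hw : Measurable w)
    (h : ∀ x y, u x ^ a * v y ^ b ≤ w (a • x + b • y))
    (hu_top : ⨆ x, u x ≠ ∞) (hv_top : ⨆ x, v x ≠ ∞) :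
    (∫⁻ x, u x) ^ a * (∫⁻ x, v x) ^ b ≤ ∫⁻ x, w x := by
  set c := ⨆ x, u x
  set d := ⨆ x, v x
  rcases eq_or_ne c 0 with hc₀ | hc₀
  · simp [ENNReal.iSup_eq_zero.1 hc₀, ENNReal.zero_rpow_of_pos ha]
  rcases eq_or_ne d 0 with hd₀ | hd₀
  · simp [ENNReal.iSup_eq_zero.1 hd₀, ENNReal.zero_rpow_of_pos hb]
  have hca₀ : c ^ a ≠ 0 := (ENNReal.rpow_pos (pos_iff_ne_zero.2 hc₀) hu_top).ne'
  have hca_top : c ^ a ≠ ∞ := ENNReal.rpow_ne_top_of_nonneg ha.le hu_top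
  set k := c ^ a * d ^ b
  have hk₀ : k ≠ 0 := mul_ne_zero hca₀ (ENNReal.rpow_pos (pos_iff_ne_zero.2 hd₀) hv_top).ne'
  have hk_top : k ≠ ∞ :=
    ENNReal.mul_ne_top hca_top (ENNReal.rpow_ne_top_of_nonneg hb.le hv_top)
  have hscale (p q : ℝ≥0∞) : (p * c⁻¹) ^ a * (q * d⁻¹) ^ b = p ^ a * q ^ b * k⁻¹ := by
    rw [ENNReal.mul_rpow_of_nonneg _ _ ha.le, ENNReal.mul_rpow_of_nonneg _ _ hb.le,
      ENNReal.inv_rpow, ENNReal.inv_rpow, mul_mul_mul_comm,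
      ENNReal.mul_inv (Or.inl hca₀) (Or.inl hca_top)]
  -- `u / c` and `v / d` both have supremum `1`
  have hadd := ofReal_mul_lintegral_add_le ha hb hab (hu.mul_const c⁻¹) (hv.mul_const d⁻¹)
    (hw.mul_const k⁻¹) (fun x y => by rw [hscale]; gcongr; exact h x y)
    (by rw [← ENNReal.iSup_mul, ← ENNReal.iSup_mul, ENNReal.mul_inv_cancel hc₀ hu_top,
      ENNReal.mul_inv_cancel hd₀ hv_top])
  rw [lintegral_mul_const' _ _ (ENNReal.inv_ne_top.2 hc₀),
    lintegral_mul_const' _ _ (ENNReal.inv_ne_top.2 hd₀),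
    lintegral_mul_const' _ _ (ENNReal.inv_ne_top.2 hk₀)] at hadd
  calc (∫⁻ x, u x) ^ a * (∫⁻ x, v x) ^ b
      = ((∫⁻ x, u x) * c⁻¹) ^ a * ((∫⁻ x, v x) * d⁻¹) ^ b * k := by
        rw [hscale, mul_assoc, ENNReal.inv_mul_cancel hk₀ hk_top, mul_one]
    _ ≤ (ENNReal.ofReal a * ((∫⁻ x, u x) * c⁻¹)
          + ENNReal.ofReal b * ((∫⁻ x, v x) * d⁻¹)) * k := by
        gcongr
        exact ENNReal.rpow_mul_rpow_le_add ha hb hab _ _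
    _ ≤ (∫⁻ x, w x) * k⁻¹ * k := by gcongr
    _ = ∫⁻ x, w x := by rw [mul_assoc, ENNReal.inv_mul_cancel hk₀ hk_top, mul_one]

end Real

def PrekopaLeindler {E : Type*} [MeasurableSpace E] [Add E] [SMul ℝ E] (μ : Measure E)
    (a b : ℝ) : Prop :=
  ∀ u v w : E → ℝ≥0∞, Measurable u → Measurable v → Measurable w →
    (∀ x y, u x ^ a * v y ^ b ≤ w (a • x + b • y)) →
    (∫⁻ x, u x ∂μ) ^ a * (∫⁻ x, v x ∂μ) ^ b ≤ ∫⁻ x, w x ∂μ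

theorem Real.prekopaLeindler {a b : ℝ} (ha : 0 < a) (hb : 0 < b) (hab : a + b = 1) :
    PrekopaLeindler (volume : Measure ℝ) a b := by
  intro u v w hu hv hw h
  rw [lintegral_eq_iSup_lintegral_min_natCast hu, lintegral_eq_iSup_lintegral_min_natCast hv,
    ENNReal.iSup_rpow ha, ENNReal.iSup_rpow hb, ENNReal.iSup_mul]
  refine iSup_le fun m => ?_
  rw [ENNReal.mul_iSup]
  refine iSup_le fun n => ?_
  refine lintegral_rpow_mul_lintegral_rpow_le_of_iSup_ne_top ha hb hab
    (hu.min measurable_const) (hv.min measurable_const) hw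
    (fun x y => le_trans (by gcongr <;> exact min_le_left _ _) (h x y)) ?_ ?_
  · exact ne_top_of_le_ne_top (ENNReal.natCast_ne_top m) (iSup_le fun _ => min_le_right _ _)
  · exact ne_top_of_le_ne_top (ENNReal.natCast_ne_top n) (iSup_le fun _ => min_le_right _ _)

namespace PrekopaLeindler

variable {E F : Type*} [MeasurableSpace E] [Add E] [SMul ℝ E] [MeasurableSpace F] [Add F]
  [SMul ℝ F] {a b : ℝ}

theorem of_unique [Unique E] (μ : Measure E) (ha : 0 ≤ a) (hb : 0 ≤ b) (hab : a + b = 1) :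
    PrekopaLeindler μ a b := by
  intro u v w _ _ _ h
  simp only [lintegral_unique]
  calc (u default * μ univ) ^ a * (v default * μ univ) ^ b
      = u default ^ a * v default ^ b * μ univ := by
        rw [ENNReal.mul_rpow_of_nonneg _ _ ha, ENNReal.mul_rpow_of_nonneg _ _ hb,
          mul_mul_mul_comm, ← ENNReal.rpow_add_of_nonneg _ _ ha hb, hab, ENNReal.rpow_one]
    _ ≤ w default * μ univ := by
        gcongr
        simpa only [Unique.eq_default] using h default default

theorem of_measurePreserving {μ : Measure E} {ν : Measure F} (hμ : PrekopaLeindler μ a b)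
    {e : E → F} (he : MeasurePreserving e μ ν)
    (hlin : ∀ x y, e (a • x + b • y) = a • e x + b • e y) : PrekopaLeindler ν a b := by
  intro u v w hu hv hw h
  rw [← he.lintegral_comp hu, ← he.lintegral_comp hv, ← he.lintegral_comp hw]
  exact hμ _ _ _ (hu.comp he.measurable) (hv.comp he.measurable) (hw.comp he.measurable)
    fun x y => by simpa only [Function.comp, hlin] using h (e x) (e y)

theorem prod {μ : Measure E} {ν : Measure F} [SFinite ν] (hμ : PrekopaLeindler μ a b)
    (hν : PrekopaLeindler ν a b) : PrekopaLeindler (μ.prod ν) a b := by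
  intro u v w hu hv hw h
  rw [lintegral_prod _ hu.aemeasurable, lintegral_prod _ hv.aemeasurable,
    lintegral_prod _ hw.aemeasurable]
  exact hμ _ _ _ hu.lintegral_prod_right' hv.lintegral_prod_right' hw.lintegral_prod_right'
    fun x x' => hν _ _ _ (hu.comp measurable_prodMk_left) (hv.comp measurable_prodMk_left)
      (hw.comp measurable_prodMk_left) fun y y' => h (x, y) (x', y')

end PrekopaLeindler

theorem prekopaLeindler_volume_pi {a b : ℝ} (ha : 0 < a) (hb : 0 < b) (hab : a + b = 1) :
    ∀ n, PrekopaLeindler (volume : Measure (Fin n → ℝ)) a b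
  | 0 => .of_unique _ ha.le hb.le hab
  | n + 1 =>
    ((Real.prekopaLeindler ha hb hab).prod
      (prekopaLeindler_volume_pi ha hb hab n)).of_measurePreserving
      (volume_preserving_piFinSuccAbove (fun _ => ℝ) 0).symm fun x y => by
        ext j
        cases j using Fin.cases <;> simp

theorem prekopa_leindler_general (n : ℕ) (a b : ℝ) (ha : 0 < a) (hb : 0 < b) (hab : a + b = 1)
    (u v w : EuclideanSpace ℝ (Fin n) → ℝ)
    (hum : Measurable u) (hvm : Measurable v) (hwm : Measurable w)
    (h : ∀ x y, u x ^ a * v y ^ b ≤ w (a • x + b • y)) :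
    (∫⁻ x, ENNReal.ofReal (u x)) ^ a * (∫⁻ x, ENNReal.ofReal (v x)) ^ b
      ≤ ∫⁻ x, ENNReal.ofReal (w x) := by
  have hPL : PrekopaLeindler (volume : Measure (EuclideanSpace ℝ (Fin n))) a b :=
    (prekopaLeindler_volume_pi ha hb hab n).of_measurePreserving (PiLp.volume_preserving_toLp _)
      fun _ _ => rfl
  exact hPL _ _ _ hum.ennreal_ofReal hvm.ennreal_ofReal hwm.ennreal_ofReal
    fun x y => ENNReal.ofReal_rpow_mul_ofReal_rpow_le ha hb (h x y)

theorem prekopa_leindler (n : ℕ) (a b : ℝ) (ha : 0 < a) (hb : 0 < b) (hab : a + b = 1)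
    (u v w : EuclideanSpace ℝ (Fin n) → ℝ)
    (hu0 : ∀ x, 0 ≤ u x) (hv0 : ∀ x, 0 ≤ v x) (hw0 : ∀ x, 0 ≤ w x)
    (hum : Measurable u) (hvm : Measurable v) (hwm : Measurable w)
    (h : ∀ x y, u x ^ a * v y ^ b ≤ w (a • x + b • y)) :
    (∫⁻ x, ENNReal.ofReal (u x)) ^ a * (∫⁻ x, ENNReal.ofReal (v x)) ^ b
      ≤ ∫⁻ x, ENNReal.ofReal (w x) :=
  prekopa_leindler_general n a b ha hb hab u v w hum hvm hwm h
end

section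
/- Let μ and ν be probability measures with e^{-c} ≤ dν/dμ ≤ e^{c} for some c ≥ 0. Then for every nonnegative f, e^{-c} Ent_ν(f) ≤ Ent_μ(f) ≤ e^{c} Ent_ν(f). -/
/-!
With `φₐ(x) = x log (x / a) - x + a = a · klFun (x / a) ≥ 0`, linearity of the integral gives
`∫ φₐ(f) dρ = Ent_ρ f + φₐ(∫ f dρ)` for a probability measure `ρ`; hence `Ent_ρ f` is the minimum
of `a ↦ ∫ φₐ(f) dρ`, attained at the mean `a = ∫ f dρ`. The density bounds give
`∫ g dν ≤ e^c ∫ g dμ` and `∫ g dμ ≤ e^c ∫ g dν` for `g ≥ 0`. Taking `g = φₐ(f)` with `a` the mean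
of `f` under the measure on the right bounds each entropy by `e^c` times the other.
-/

open MeasureTheory

/-- The entropy of `f` with respect to `μ`. -/
noncomputable def Ent {α : Type*} [MeasurableSpace α] (μ : Measure α) (f : α → ℝ) : ℝ :=
  ∫ x, f x * Real.log (f x / ∫ y, f y ∂μ) ∂μ

open Real

noncomputable def entropyIntegrand (a x : ℝ) : ℝ := x * log (x / a) - x + a

lemma entropyIntegrand_eq_mul_klFun {a : ℝ} (ha : a ≠ 0) (x : ℝ) :
    entropyIntegrand a x = a * InformationTheory.klFun (x / a) := by
  simp only [entropyIntegrand, InformationTheory.klFun]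
  field_simp
  ring

lemma entropyIntegrand_nonneg {a x : ℝ} (ha : 0 < a) (hx : 0 ≤ x) : 0 ≤ entropyIntegrand a x := by
  rw [entropyIntegrand_eq_mul_klFun ha.ne']
  exact mul_nonneg ha.le (InformationTheory.klFun_nonneg (div_nonneg hx ha.le))

lemma entropyIntegrand_self (a : ℝ) : entropyIntegrand a a = 0 := by
  rcases eq_or_ne a 0 with rfl | ha
  · simp [entropyIntegrand]
  · simp [entropyIntegrand, div_self ha]

lemma entropyIntegrand_eq_add {a m : ℝ} (ha : a ≠ 0) (hm : m ≠ 0) (x : ℝ) :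
    entropyIntegrand a x = x * log (x / m) + (log (m / a) * x - x + a) := by
  rcases eq_or_ne x 0 with rfl | hx
  · simp [entropyIntegrand]
  · rw [entropyIntegrand, ← div_mul_div_cancel₀ hm, log_mul (div_ne_zero hx hm) (div_ne_zero hm ha)]
    ring

/-- Since `x / 0 = 0` and `log 0 = 0`, the integrand itself vanishes. -/
lemma Ent_eq_zero_of_integral_eq_zero {α : Type*} [MeasurableSpace α] {μ : Measure α}
    {f : α → ℝ} (h : ∫ x, f x ∂μ = 0) : Ent μ f = 0 := by
  simp [Ent, h]

section Variational

variable {α : Type*} [MeasurableSpace α] {ρ : Measure α} {f : α → ℝ} {a : ℝ}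

lemma integrable_entropyIntegrand [IsFiniteMeasure ρ] (ha : a ≠ 0) (hm : ∫ x, f x ∂ρ ≠ 0)
    (hf : Integrable f ρ) (hflog : Integrable (fun x => f x * log (f x / ∫ y, f y ∂ρ)) ρ) :
    Integrable (fun x => entropyIntegrand a (f x)) ρ := by
  simp only [entropyIntegrand_eq_add ha hm]
  exact hflog.add (((hf.const_mul _).sub hf).add (integrable_const a))

lemma integral_entropyIntegrand [IsProbabilityMeasure ρ] (ha : a ≠ 0) (hm : ∫ x, f x ∂ρ ≠ 0)
    (hf : Integrable f ρ) (hflog : Integrable (fun x => f x * log (f x / ∫ y, f y ∂ρ)) ρ) :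
    ∫ x, entropyIntegrand a (f x) ∂ρ = Ent ρ f + entropyIntegrand a (∫ x, f x ∂ρ) := by
  set m := ∫ x, f x ∂ρ
  have hdiff : Integrable (fun x => log (m / a) * f x - f x) ρ := (hf.const_mul _).sub hf
  have haff : Integrable (fun x => log (m / a) * f x - f x + a) ρ := hdiff.add (integrable_const a)
  calc ∫ x, entropyIntegrand a (f x) ∂ρ
      = ∫ x, (f x * log (f x / m) + (log (m / a) * f x - f x + a)) ∂ρ := by
        simp only [entropyIntegrand_eq_add ha hm]
    _ = Ent ρ f + (log (m / a) * m - m + a) := by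
        rw [integral_add hflog haff, integral_add hdiff (integrable_const a),
          integral_sub (hf.const_mul _) hf, integral_const_mul, integral_const, probReal_univ,
          one_smul]
        rfl
    _ = Ent ρ f + entropyIntegrand a m := by
        rw [entropyIntegrand_eq_add ha hm m, div_self hm, log_one, mul_zero, zero_add]

lemma Ent_eq_integral_entropyIntegrand [IsProbabilityMeasure ρ] (hm : ∫ x, f x ∂ρ ≠ 0)
    (hf : Integrable f ρ) (hflog : Integrable (fun x => f x * log (f x / ∫ y, f y ∂ρ)) ρ) :
    Ent ρ f = ∫ x, entropyIntegrand (∫ y, f y ∂ρ) (f x) ∂ρ := by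
  rw [integral_entropyIntegrand hm hm hf hflog, entropyIntegrand_self, add_zero]

lemma Ent_le_integral_entropyIntegrand [IsProbabilityMeasure ρ] (ha : 0 < a)
    (hm : 0 < ∫ x, f x ∂ρ) (hf : Integrable f ρ)
    (hflog : Integrable (fun x => f x * log (f x / ∫ y, f y ∂ρ)) ρ) :
    Ent ρ f ≤ ∫ x, entropyIntegrand a (f x) ∂ρ := by
  rw [integral_entropyIntegrand ha.ne' hm.ne' hf hflog]
  linarith [entropyIntegrand_nonneg ha hm.le]

end Variational

section DensityComparison

variable {α : Type*} [MeasurableSpace α] {μ ν : Measure α} [SigmaFinite ν]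
  [ν.HaveLebesgueDecomposition μ] {g : α → ℝ} {C : ℝ}

lemma integral_le_mul_integral_of_rnDeriv_le (hac : ν ≪ μ)
    (hD : ∀ᵐ x ∂μ, (ν.rnDeriv μ x).toReal ≤ C) (hg : 0 ≤ᵐ[μ] g) (hgμ : Integrable g μ) :
    ∫ x, g x ∂ν ≤ C * ∫ x, g x ∂μ := by
  rw [← integral_toReal_rnDeriv_mul hac, ← integral_const_mul]
  refine integral_mono_of_nonneg ?_ (hgμ.const_mul C) ?_
  · filter_upwards [hg] with x hx using mul_nonneg ENNReal.toReal_nonneg hx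
  · filter_upwards [hD, hg] with x hx hgx using mul_le_mul_of_nonneg_right hx hgx

lemma integral_le_mul_integral_of_inv_le_rnDeriv (hac : ν ≪ μ) (hC : 0 < C)
    (hD : ∀ᵐ x ∂μ, C⁻¹ ≤ (ν.rnDeriv μ x).toReal) (hg : 0 ≤ᵐ[μ] g) (hgν : Integrable g ν) :
    ∫ x, g x ∂μ ≤ C * ∫ x, g x ∂ν := by
  rw [← integral_toReal_rnDeriv_mul hac, ← integral_const_mul]
  refine integral_mono_of_nonneg hg (((integrable_toReal_rnDeriv_mul_iff hac).2 hgν).const_mul C) ?_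
  filter_upwards [hD, hg] with x hx hgx
  calc g x = C * C⁻¹ * g x := by rw [mul_inv_cancel₀ hC.ne', one_mul]
    _ ≤ C * ((ν.rnDeriv μ x).toReal * g x) := by
      rw [mul_assoc]
      exact mul_le_mul_of_nonneg_left (mul_le_mul_of_nonneg_right hx hgx) hC.le

end DensityComparison

lemma Ent_le_mul_Ent_of_integral_le {α : Type*} [MeasurableSpace α] {μ ν : Measure α}
    [IsProbabilityMeasure μ] [IsProbabilityMeasure ν] {f : α → ℝ} {C : ℝ}
    (hcomp : ∀ g : α → ℝ, (∀ x, 0 ≤ g x) → Integrable g μ → Integrable g ν →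
      ∫ x, g x ∂ν ≤ C * ∫ x, g x ∂μ)
    (hf : ∀ x, 0 ≤ f x) (hmμ : 0 < ∫ x, f x ∂μ) (hmν : 0 < ∫ x, f x ∂ν)
    (hfμ : Integrable f μ) (hfν : Integrable f ν)
    (hμint : Integrable (fun x => f x * log (f x / ∫ y, f y ∂μ)) μ)
    (hνint : Integrable (fun x => f x * log (f x / ∫ y, f y ∂ν)) ν) :
    Ent ν f ≤ C * Ent μ f :=
  calc Ent ν f ≤ ∫ x, entropyIntegrand (∫ y, f y ∂μ) (f x) ∂ν :=
        Ent_le_integral_entropyIntegrand hmμ hmν hfν hνint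
    _ ≤ C * ∫ x, entropyIntegrand (∫ y, f y ∂μ) (f x) ∂μ :=
        hcomp _ (fun x => entropyIntegrand_nonneg hmμ (hf x))
          (integrable_entropyIntegrand hmμ.ne' hmμ.ne' hfμ hμint)
          (integrable_entropyIntegrand hmμ.ne' hmν.ne' hfν hνint)
    _ = C * Ent μ f := by rw [Ent_eq_integral_entropyIntegrand hmμ.ne' hfμ hμint]

theorem entropy_comparison_general {α : Type*} [MeasurableSpace α] (μ ν : Measure α)
    [IsProbabilityMeasure μ] [IsProbabilityMeasure ν] (hac : ν ≪ μ)
    (c : ℝ)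
    (hd : ∀ᵐ x ∂μ, Real.exp (-c) ≤ (ν.rnDeriv μ x).toReal ∧
      (ν.rnDeriv μ x).toReal ≤ Real.exp c)
    (f : α → ℝ) (hf : ∀ x, 0 ≤ f x)
    (hfμ : Integrable f μ) (hfν : Integrable f ν)
    (hμint : Integrable (fun x => f x * Real.log (f x / ∫ y, f y ∂μ)) μ)
    (hνint : Integrable (fun x => f x * Real.log (f x / ∫ y, f y ∂ν)) ν) :
    Real.exp (-c) * Ent ν f ≤ Ent μ f ∧ Ent μ f ≤ Real.exp c * Ent ν f := by
  have hlower : ∀ᵐ x ∂μ, (exp c)⁻¹ ≤ (ν.rnDeriv μ x).toReal :=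
    hd.mono fun x hx => (exp_neg c) ▸ hx.1
  have hνμ : ∀ g : α → ℝ, (∀ x, 0 ≤ g x) → Integrable g μ → Integrable g ν →
      ∫ x, g x ∂ν ≤ exp c * ∫ x, g x ∂μ := fun g hg hgμ _ =>
    integral_le_mul_integral_of_rnDeriv_le hac (hd.mono fun x hx => hx.2) (ae_of_all _ hg) hgμ
  have hμν : ∀ g : α → ℝ, (∀ x, 0 ≤ g x) → Integrable g ν → Integrable g μ →
      ∫ x, g x ∂μ ≤ exp c * ∫ x, g x ∂ν := fun g hg hgν _ =>
    integral_le_mul_integral_of_inv_le_rnDeriv hac (exp_pos c) hlower (ae_of_all _ hg) hgν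
  rcases (integral_nonneg hf : 0 ≤ ∫ x, f x ∂μ).eq_or_lt with hmμ | hmμ
  · have hmν : ∫ x, f x ∂ν = 0 := le_antisymm
      (by simpa [← hmμ] using hνμ f hf hfμ hfν) (integral_nonneg hf)
    simp [Ent_eq_zero_of_integral_eq_zero hmμ.symm, Ent_eq_zero_of_integral_eq_zero hmν]
  have hmν : 0 < ∫ x, f x ∂ν :=
    pos_of_mul_pos_right (hmμ.trans_le (hμν f hf hfν hfμ)) (exp_pos c).le
  refine ⟨?_, Ent_le_mul_Ent_of_integral_le hμν hf hmν hmμ hfν hfμ hνint hμint⟩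
  rw [exp_neg, inv_mul_le_iff₀ (exp_pos c)]
  exact Ent_le_mul_Ent_of_integral_le hνμ hf hmμ hmν hfμ hfν hμint hνint

theorem entropy_comparison {α : Type*} [MeasurableSpace α] (μ ν : Measure α)
    [IsProbabilityMeasure μ] [IsProbabilityMeasure ν] (hac : ν ≪ μ)
    (c : ℝ) (hc : 0 ≤ c)
    (hd : ∀ᵐ x ∂μ, Real.exp (-c) ≤ (ν.rnDeriv μ x).toReal ∧
      (ν.rnDeriv μ x).toReal ≤ Real.exp c)
    (f : α → ℝ) (hf : ∀ x, 0 ≤ f x)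
    (hfμ : Integrable f μ) (hfν : Integrable f ν)
    (hμint : Integrable (fun x => f x * Real.log (f x / ∫ y, f y ∂μ)) μ)
    (hνint : Integrable (fun x => f x * Real.log (f x / ∫ y, f y ∂ν)) ν) :
    Real.exp (-c) * Ent ν f ≤ Ent μ f ∧ Ent μ f ≤ Real.exp c * Ent ν f :=
  entropy_comparison_general μ ν hac c hd f hf hfμ hfν hμint hνint
end

section
/- Let p ≥ 2 and q ∈ (1, 2] with 1/p + 1/q = 1, and let φ(x) = ‖x‖^p/p on ℝⁿ, with convex conjugate φ*. Then the function ψ(x,y) = (x·y − φ*(∇φ(x)) + φ*(∇φ(x) − y))/‖y‖^q is bounded above on ℝⁿ × (ℝⁿ \ {0}). -/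
open scoped RealInnerProductSpace

/-- The Legendre (Fenchel) transform of `φ`. -/
noncomputable def legendre {n : ℕ} (φ : EuclideanSpace ℝ (Fin n) → ℝ)
    (y : EuclideanSpace ℝ (Fin n)) : ℝ :=
  ⨆ z, ⟪y, z⟫ - φ z

/-- Tangent-line (concavity) bound for `t ↦ t ^ r`, `0 ≤ r ≤ 1`. -/
lemma conc_aux {a T r : ℝ} (ha : 0 < a) (hT : 0 ≤ T) (hr0 : 0 ≤ r) (hr1 : r ≤ 1) :
    T ^ r ≤ a ^ r + r * a ^ (r - 1) * (T - a) := by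
  have hs : (-1 : ℝ) ≤ T / a - 1 := by
    have : 0 ≤ T / a := div_nonneg hT ha.le
    linarith
  have hB := rpow_one_add_le_one_add_mul_self hs hr0 hr1
  have h1 : 1 + (T / a - 1) = T / a := by ring
  rw [h1, Real.div_rpow hT ha.le] at hB
  have hapos : 0 < a ^ r := Real.rpow_pos_of_pos ha r
  have h2 := (div_le_iff₀ hapos).mp hB
  calc T ^ r ≤ (1 + r * (T / a - 1)) * a ^ r := h2
    _ = a ^ r + r * (a ^ r / a) * (T - a) := by field_simp
    _ = a ^ r + r * a ^ (r - 1) * (T - a) := by rw [Real.rpow_sub_one ha.ne']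

theorem psi_bounded (n : ℕ) (p q : ℝ) (hp : 2 ≤ p) (hpq : 1 / p + 1 / q = 1) :
    ∃ c : ℝ, ∀ x y : EuclideanSpace ℝ (Fin n), y ≠ 0 →
      (⟪x, y⟫ - legendre (fun z => ‖z‖ ^ p / p) (gradient (fun z => ‖z‖ ^ p / p) x)
        + legendre (fun z => ‖z‖ ^ p / p) (gradient (fun z => ‖z‖ ^ p / p) x - y))
        / ‖y‖ ^ q ≤ c := by
  have hp1 : (1:ℝ) < p := by linarith
  have hp0 : (0:ℝ) < p := by linarith
  have h12 : 1/p ≤ 1/2 := one_div_le_one_div_of_le (by norm_num) hp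
  have hp_inv_pos : 0 < 1/p := by positivity
  have hqinv : 1/q = 1 - 1/p := by linarith
  have hqinv_pos : 0 < 1/q := by rw [hqinv]; linarith
  have hq0 : (0:ℝ) < q := one_div_pos.mp hqinv_pos
  have hqq : q * (1/q) = 1 := mul_one_div_cancel hq0.ne'
  have hq1 : (1:ℝ) < q := by nlinarith
  have hq2 : q ≤ 2 := by nlinarith
  have hsum : p + q = p * q := by
    have h := hpq
    field_simp at h
    linarith
  have hid1 : (p-1)*(q-1) = 1 := by linear_combination -hsum
  have hid2 : (p-1)*q = p := by linear_combination -hsum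
  have hid3 : (p-1)*(q-2) = 2-p := by linear_combination -hsum
  have hid4 : (q-1)*(2-p) = q-2 := by linear_combination hsum
  have hconj : Real.HolderConjugate q p :=
    Real.holderConjugate_iff.mpr ⟨hq1, by rw [inv_eq_one_div, inv_eq_one_div]; linarith⟩
  -- Upper bound on the Legendre transform (Young's inequality)
  have hub : ∀ w z : EuclideanSpace ℝ (Fin n), ⟪w, z⟫ - ‖z‖ ^ p / p ≤ ‖w‖ ^ q / q := by
    intro w z
    have h1 : ⟪w, z⟫ ≤ ‖w‖ * ‖z‖ := real_inner_le_norm w z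
    have h2 : ‖w‖ * ‖z‖ ≤ ‖w‖ ^ q / q + ‖z‖ ^ p / p :=
      Real.young_inequality_of_nonneg (norm_nonneg w) (norm_nonneg z) hconj
    linarith
  have hbdd : ∀ w : EuclideanSpace ℝ (Fin n),
      BddAbove (Set.range fun z : EuclideanSpace ℝ (Fin n) => ⟪w, z⟫ - ‖z‖ ^ p / p) := by
    intro w
    refine ⟨‖w‖ ^ q / q, ?_⟩
    rintro _ ⟨z, rfl⟩
    exact hub w z
  have hL_ub : ∀ w : EuclideanSpace ℝ (Fin n), legendre (fun z => ‖z‖ ^ p / p) w ≤ ‖w‖ ^ q / q := by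
    intro w
    exact ciSup_le fun z => hub w z
  have hL_lb : ∀ (w x : EuclideanSpace ℝ (Fin n)),
      ⟪w, x⟫ - ‖x‖ ^ p / p ≤ legendre (fun z => ‖z‖ ^ p / p) w := by
    intro w x
    exact le_ciSup (hbdd w) x
  -- the gradient of `‖·‖^p / p`
  have hgrad : ∀ x : EuclideanSpace ℝ (Fin n),
      gradient (fun z => ‖z‖ ^ p / p) x = ‖x‖ ^ (p - 2) • x := by
    intro x
    have hF := (hasFDerivAt_norm_rpow x hp1).const_smul (1/p)
    have he : (fun z : EuclideanSpace ℝ (Fin n) => (1/p) • (‖z‖ ^ p)) =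
        fun z => ‖z‖ ^ p / p := by
      funext z
      simp only [smul_eq_mul]
      ring
    change HasFDerivAt (fun z : EuclideanSpace ℝ (Fin n) => (1/p) • (‖z‖ ^ p)) _ x at hF
    rw [he] at hF
    have hG : HasGradientAt (fun z : EuclideanSpace ℝ (Fin n) => ‖z‖ ^ p / p)
        (‖x‖ ^ (p - 2) • x) x := by
      rw [hasGradientAt_iff_hasFDerivAt]
      refine hF.congr_fderiv ?_
      ext z
      simp only [InnerProductSpace.toDual_apply_apply, real_inner_smul_left,
        ContinuousLinearMap.smul_apply, innerSL_apply_apply, smul_eq_mul]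
      field_simp
    exact hG.gradient
  refine ⟨(2:ℝ)^(q-1) + (3:ℝ)^q/q + (2:ℝ)^(q-3), ?_⟩
  intro x y hy
  rw [hgrad x]
  set s := ‖x‖ with hs
  set t := ‖y‖ with htdef
  set u : EuclideanSpace ℝ (Fin n) := s ^ (p-2) • x with hu
  have hs_nonneg : 0 ≤ s := norm_nonneg x
  have ht : 0 < t := norm_pos_iff.mpr hy
  have hu_norm : ‖u‖ = s ^ (p - 1) := by
    rw [hu, norm_smul, Real.norm_eq_abs, abs_of_nonneg (Real.rpow_nonneg hs_nonneg _),
      show p - 1 = (p-2) + 1 by ring,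
      Real.rpow_add' hs_nonneg (ne_of_gt (by linarith : (0:ℝ) < (p-2)+1)), Real.rpow_one]
  have hux : ⟪u, x⟫ = s ^ p := by
    have hxx : ((s^2 : ℝ)) = s^(2:ℝ) := by
      rw [← Real.rpow_natCast s 2]; norm_num
    rw [hu, real_inner_smul_left, real_inner_self_eq_norm_sq, ← hs, hxx,
      ← Real.rpow_add' hs_nonneg (ne_of_gt (by linarith : (0:ℝ) < (p-2)+2)),
      show (p-2)+(2:ℝ) = p by ring]
  have hLu : s ^ p / q ≤ legendre (fun z => ‖z‖ ^ p / p) u := by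
    have h := hL_lb u x
    rw [hux, ← hs] at h
    have h2 : s ^ p - s ^ p / p = s ^ p / q := by
      linear_combination (-(s^p : ℝ)) * hpq
    linarith
  have hLuy := hL_ub (u - y)
  rw [div_le_iff₀ (by positivity : (0:ℝ) < t ^ q)]
  have hstep : ⟪x, y⟫ - legendre (fun z => ‖z‖ ^ p / p) u
      + legendre (fun z => ‖z‖ ^ p / p) (u - y)
      ≤ ⟪x, y⟫ - s ^ p / q + ‖u - y‖ ^ q / q := by linarith
  refine hstep.trans ?_
  have hexp : ((2:ℝ)^(q-1) + (3:ℝ)^q/q + (2:ℝ)^(q-3)) * t^q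
      = (2:ℝ)^(q-1) * t^q + (3:ℝ)^q/q * t^q + (2:ℝ)^(q-3) * t^q := by ring
  rcases le_or_gt (s ^ (p-1)) (2*t) with hA | hB
  · -- Case A : small ‖u‖
    have hxy : ⟪x, y⟫ ≤ (2:ℝ)^(q-1) * t^q := by
      have h1 : ⟪x, y⟫ ≤ s * t := real_inner_le_norm x y
      have h2 : s ≤ (2*t)^(q-1) := by
        have h3 : (s^(p-1))^(q-1) ≤ (2*t)^(q-1) :=
          Real.rpow_le_rpow (by positivity) hA (by linarith)
        rwa [← Real.rpow_mul hs_nonneg, hid1, Real.rpow_one] at h3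
      have ht1 : t ^ (q - 1) * t = t ^ q := by
        calc t ^ (q-1) * t = t ^ (q-1) * t ^ (1:ℝ) := by rw [Real.rpow_one]
          _ = t ^ ((q-1)+1) := (Real.rpow_add ht _ _).symm
          _ = t ^ q := by rw [show (q-1)+1 = q by ring]
      calc ⟪x, y⟫ ≤ s * t := h1
        _ ≤ (2*t)^(q-1) * t := mul_le_mul_of_nonneg_right h2 ht.le
        _ = (2:ℝ)^(q-1) * t^q := by
            rw [Real.mul_rpow (by norm_num) ht.le, mul_assoc, ht1]
    have hsp : 0 ≤ s ^ p / q := by positivity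
    have hsub : ‖u - y‖ ≤ 3 * t := by
      calc ‖u - y‖ ≤ ‖u‖ + ‖y‖ := norm_sub_le u y
        _ = s^(p-1) + t := by rw [hu_norm]
        _ ≤ 2*t + t := by linarith
        _ = 3*t := by ring
    have h3 : ‖u - y‖^q ≤ (3:ℝ)^q * t^q := by
      calc ‖u - y‖^q ≤ (3*t)^q := Real.rpow_le_rpow (norm_nonneg _) hsub (by linarith)
        _ = (3:ℝ)^q * t^q := Real.mul_rpow (by norm_num) ht.le
    have h4 : ‖u - y‖^q / q ≤ (3:ℝ)^q/q * t^q := by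
      calc ‖u - y‖^q / q ≤ ((3:ℝ)^q * t^q) / q := by
            exact div_le_div_of_nonneg_right h3 hq0.le
        _ = (3:ℝ)^q/q * t^q := by ring
    have h5 : 0 ≤ (2:ℝ)^(q-3) * t^q := by positivity
    rw [hexp]
    linarith
  · -- Case B : large ‖u‖
    have hs0 : 0 < s := by
      rcases eq_or_lt_of_le hs_nonneg with h | h
      · exfalso
        rw [← h, Real.zero_rpow (by intro h0; linarith : p - 1 ≠ 0)] at hB
        linarith
      · exact h
    have hu0 : (0:ℝ) < ‖u‖ := by rw [hu_norm]; positivity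
    have hconc := conc_aux (a := ((‖u‖^2 : ℝ))) (T := ((‖u - y‖^2 : ℝ))) (r := q/2)
      (by positivity) (by positivity) (by linarith) (by linarith)
    have hsq : ∀ v : EuclideanSpace ℝ (Fin n), ((‖v‖^2 : ℝ)) ^ (q/2) = ‖v‖ ^ q := by
      intro v
      rw [← Real.rpow_natCast ‖v‖ 2, ← Real.rpow_mul (norm_nonneg v),
        show ((2:ℕ):ℝ) * (q/2) = q by push_cast; ring]
    have ha2 : ((‖u‖^2 : ℝ)) ^ (q/2) = s ^ p := by
      rw [hsq u, hu_norm, ← Real.rpow_mul hs_nonneg, hid2]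
    have ha1 : ((‖u‖^2 : ℝ)) ^ (q/2 - 1) = s ^ (2-p) := by
      rw [← Real.rpow_natCast ‖u‖ 2, ← Real.rpow_mul (norm_nonneg u),
        show ((2:ℕ):ℝ) * (q/2 - 1) = q - 2 by push_cast; ring,
        hu_norm, ← Real.rpow_mul hs_nonneg, hid3]
    have hTa : ((‖u - y‖^2 : ℝ)) - ‖u‖^2 = t^2 - 2 * (s^(p-2) * ⟪x, y⟫) := by
      rw [norm_sub_sq_real, hu, real_inner_smul_left, ← htdef]
      ring
    rw [hsq (u - y), ha2, ha1, hTa] at hconc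
    have hcanc : s^(2-p) * s^(p-2) = 1 := by
      rw [← Real.rpow_add hs0, show (2-p)+(p-2) = (0:ℝ) by ring, Real.rpow_zero]
    have hx1 : (q/2) * s^(2-p) * (t^2 - 2*(s^(p-2) * ⟪x, y⟫))
        = (q/2) * s^(2-p) * t^2 - q * ⟪x, y⟫ := by
      linear_combination (-(q * ⟪x, y⟫)) * hcanc
    have hconc2 : ‖u - y‖^q ≤ s^p + ((q/2) * s^(2-p) * t^2 - q * ⟪x, y⟫) := by
      calc ‖u - y‖^q ≤ s^p + (q/2) * s^(2-p) * (t^2 - 2*(s^(p-2) * ⟪x, y⟫)) := by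
            linarith [hconc]
        _ = s^p + ((q/2) * s^(2-p) * t^2 - q * ⟪x, y⟫) := by rw [hx1]
    have hdivq : ‖u - y‖^q / q ≤ s^p/q + s^(2-p) * t^2 / 2 - ⟪x, y⟫ := by
      have h := div_le_div_of_nonneg_right hconc2 hq0.le
      have heq : (s^p + ((q/2) * s^(2-p) * t^2 - q * ⟪x, y⟫)) / q
          = s^p/q + s^(2-p) * t^2 / 2 - ⟪x, y⟫ := by
        field_simp
        ring
      rwa [heq] at h
    have hmono : s^(2-p) ≤ (2*t)^(q-2) := by
      have h2t : (0:ℝ) < (2*t)^(q-1) := by positivity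
      have hsge : (2*t)^(q-1) ≤ s := by
        have h3 : (2*t)^(q-1) ≤ (s^(p-1))^(q-1) :=
          Real.rpow_le_rpow (by positivity) hB.le (by linarith)
        rwa [← Real.rpow_mul hs_nonneg, hid1, Real.rpow_one] at h3
      have h4 : s^(2-p) ≤ ((2*t)^(q-1))^(2-p) :=
        Real.rpow_le_rpow_of_nonpos h2t hsge (by linarith)
      rwa [← Real.rpow_mul (by positivity : (0:ℝ) ≤ 2*t), hid4] at h4
    have hfin : s^(2-p) * t^2 / 2 ≤ (2:ℝ)^(q-3) * t^q := by
      have ht2 : ((t^2 : ℝ)) = t^(2:ℝ) := by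
        rw [← Real.rpow_natCast t 2]; norm_num
      have h5 : s^(2-p) * t^2 / 2 ≤ (2*t)^(q-2) * t^2 / 2 := by
        have h6 := mul_le_mul_of_nonneg_right hmono (by positivity : (0:ℝ) ≤ t^2)
        linarith
      refine h5.trans_eq ?_
      calc (2*t)^(q-2) * t^2 / 2
          = ((2:ℝ)^(q-2)/2) * (t^(q-2) * t^(2:ℝ)) := by
            rw [Real.mul_rpow (by norm_num) ht.le, ht2]; ring
        _ = ((2:ℝ)^(q-2)/2) * t^q := by
            rw [← Real.rpow_add ht, show (q-2)+(2:ℝ) = q by ring]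
        _ = (2:ℝ)^(q-3) * t^q := by
            rw [show q-3 = (q-2) - 1 by ring,
              Real.rpow_sub_one (by norm_num : (2:ℝ) ≠ 0)]
    have e1 : 0 ≤ (2:ℝ)^(q-1) * t^q := by positivity
    have e2 : 0 ≤ (3:ℝ)^q/q * t^q := by positivity
    rw [hexp]
    linarith
end
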